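/- arXiv:2306.13791 — 3 statements merged into one kernel-verified Lean document; each statement's English description precedes it below -/
import Mathlib

section
/- For elements A, B in a Banach algebra, exp(A+B) = lim_{n→∞} [ (1/2)(exp(A/n) exp(B/n) + exp(B/n) exp(A/n)) ]^n. -/
/-!
Put `X = A/n`, `Y = B/n`, `T = ½(e^X e^Y + e^Y e^X)` and `S = e^{X+Y}`. Expanding the exponential
series to second order gives `‖T - S‖ = O(1/n²)`, and both `T` and `S` have norm at most
`e^{(‖A‖+‖B‖)/n}`. The telescoping bound `‖T^n - S^n‖ ≤ n max(‖T‖,‖S‖)^{n-1} ‖T - S‖` then gives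
`‖T^n - e^{A+B}‖ = O(1/n)`.

The norm bounds on exponentials need `‖1‖ = 1`. A general Banach algebra reduces to this case
through its left regular representation `a ↦ (x ↦ a x)`, which has the continuous left inverse
`L ↦ L 1`.
-/

open NormedSpace Filter Finset Topology
open scoped Nat

section Telescoping

variable {R : Type*} [SeminormedRing R]

theorem norm_pow_succ_sub_pow_succ_le {a b : R} {M : ℝ} (ha : ‖a‖ ≤ M) (hb : ‖b‖ ≤ M) (n : ℕ) :
    ‖a ^ (n + 1) - b ^ (n + 1)‖ ≤ (n + 1) * M ^ n * ‖a - b‖ := by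
  induction n with
  | zero => simp
  | succ n ih =>
    have hM : 0 ≤ M := (norm_nonneg a).trans ha
    have hsplit : a ^ (n + 2) - b ^ (n + 2) =
        (a - b) * a ^ (n + 1) + b * (a ^ (n + 1) - b ^ (n + 1)) := by
      rw [sub_mul, mul_sub, ← pow_succ', ← pow_succ']
      abel
    have hpow : ‖a ^ (n + 1)‖ ≤ M ^ (n + 1) :=
      (norm_pow_le' a n.succ_pos).trans (pow_le_pow_left₀ (norm_nonneg a) ha _)
    calc ‖a ^ (n + 2) - b ^ (n + 2)‖
        ≤ ‖a - b‖ * M ^ (n + 1) + M * ((n + 1) * M ^ n * ‖a - b‖) := by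
          rw [hsplit]
          exact (norm_add_le _ _).trans (add_le_add ((norm_mul_le _ _).trans (by gcongr))
            ((norm_mul_le _ _).trans (by gcongr)))
      _ = (↑(n + 1) + 1) * M ^ (n + 1) * ‖a - b‖ := by push_cast; ring

end Telescoping

section JordanMul

variable {R : Type*} [SeminormedRing R] [NormedAlgebra ℝ R]

noncomputable def jordanMul (a b : R) : R := (1 / 2 : ℝ) • (a * b + b * a)

theorem norm_jordanMul_le (a b : R) : ‖jordanMul a b‖ ≤ ‖a‖ * ‖b‖ := by
  rw [jordanMul, norm_smul, Real.norm_of_nonneg (by norm_num)]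
  have := norm_add_le_of_le (norm_mul_le a b) (norm_mul_le b a)
  linarith [mul_comm ‖a‖ ‖b‖]

theorem jordanMul_sub (a b c : R) :
    jordanMul a b - c = (1 / 2 : ℝ) • ((a * b - c) + (b * a - c)) := by
  rw [jordanMul]; module

theorem map_jordanMul {S : Type*} [SeminormedRing S] [NormedAlgebra ℝ S] (f : R →ₐ[ℝ] S)
    (a b : R) :
    f (jordanMul a b) = jordanMul (f a) (f b) := by
  simp only [jordanMul, map_smul, map_add, map_mul]

end JordanMul

namespace NormedSpace

variable {𝔸 : Type*} [NormedRing 𝔸] [NormOneClass 𝔸] [NormedAlgebra ℝ 𝔸] [CompleteSpace 𝔸]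

theorem norm_exp_sub_sum_range_le (x : 𝔸) (k : ℕ) :
    ‖exp x - ∑ i ∈ range k, (i !⁻¹ : ℝ) • x ^ i‖ ≤ ‖x‖ ^ k * Real.exp ‖x‖ := by
  have htail := (hasSum_nat_add_iff' k).mpr (exp_series_hasSum_exp' (𝕂 := ℝ) x)
  have hmajorant :
      HasSum (fun n : ℕ => ‖x‖ ^ k * (‖x‖ ^ n / n !)) (‖x‖ ^ k * Real.exp ‖x‖) := by
    rw [Real.exp_eq_exp_ℝ]
    exact (expSeries_div_hasSum_exp ‖x‖).mul_left _
  refine htail.norm_le_of_bounded hmajorant fun n => ?_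
  rw [norm_smul, norm_inv, RCLike.norm_natCast]
  calc ((n + k)! : ℝ)⁻¹ * ‖x ^ (n + k)‖ ≤ (n ! : ℝ)⁻¹ * ‖x‖ ^ (n + k) := by
        gcongr
        · omega
        · exact norm_pow_le x _
    _ = ‖x‖ ^ k * (‖x‖ ^ n / n !) := by ring

theorem norm_exp_le (x : 𝔸) : ‖exp x‖ ≤ Real.exp ‖x‖ := by
  simpa using norm_exp_sub_sum_range_le x 0

theorem norm_exp_sub_one_le (x : 𝔸) : ‖exp x - 1‖ ≤ ‖x‖ * Real.exp ‖x‖ := by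
  simpa using norm_exp_sub_sum_range_le x 1

theorem norm_exp_sub_one_sub_le (x : 𝔸) : ‖exp x - 1 - x‖ ≤ ‖x‖ ^ 2 * Real.exp ‖x‖ := by
  simpa [sum_range_succ, sub_sub] using norm_exp_sub_sum_range_le x 2

theorem norm_exp_mul_exp_sub_exp_add_le (x y : 𝔸) :
    ‖exp x * exp y - exp (x + y)‖ ≤ 2 * (‖x‖ + ‖y‖) ^ 2 * Real.exp (‖x‖ + ‖y‖) := by
  set a := ‖x‖
  set b := ‖y‖
  have ha : 0 ≤ a := norm_nonneg x
  have hb : 0 ≤ b := norm_nonneg y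
  have hexp_b : Real.exp b ≤ Real.exp (a + b) := Real.exp_le_exp.mpr (by linarith)
  have h₁ : ‖(exp x - 1 - x) * exp y‖ ≤ a ^ 2 * Real.exp (a + b) := by
    rw [Real.exp_add, ← mul_assoc]
    exact (norm_mul_le _ _).trans
      (mul_le_mul (norm_exp_sub_one_sub_le x) (norm_exp_le y) (norm_nonneg _) (by positivity))
  have h₂ : ‖x * (exp y - 1)‖ ≤ a * b * Real.exp (a + b) := by
    rw [mul_assoc]
    exact (norm_mul_le _ _).trans (by gcongr; exact (norm_exp_sub_one_le y).trans (by gcongr))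
  have h₃ : ‖exp y - 1 - y‖ ≤ b ^ 2 * Real.exp (a + b) :=
    (norm_exp_sub_one_sub_le y).trans (by gcongr)
  have h₄ : ‖exp (x + y) - 1 - (x + y)‖ ≤ (a + b) ^ 2 * Real.exp (a + b) :=
    (norm_exp_sub_one_sub_le (x + y)).trans (by gcongr <;> exact norm_add_le x y)
  have hsplit : exp x * exp y - exp (x + y) =
      (exp x - 1 - x) * exp y + x * (exp y - 1) + (exp y - 1 - y) -
        (exp (x + y) - 1 - (x + y)) := by
    noncomm_ring
  calc ‖exp x * exp y - exp (x + y)‖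
      ≤ (a ^ 2 + a * b + b ^ 2 + (a + b) ^ 2) * Real.exp (a + b) := by
        rw [hsplit]
        refine (norm_sub_le _ _).trans ?_
        have := norm_add₃_le (a := (exp x - 1 - x) * exp y) (b := x * (exp y - 1))
          (c := exp y - 1 - y)
        linarith
    _ ≤ 2 * (a + b) ^ 2 * Real.exp (a + b) := by
        gcongr ?_ * _
        linarith [mul_nonneg ha hb]

theorem norm_jordanMul_exp_le (x y : 𝔸) :
    ‖jordanMul (exp x) (exp y)‖ ≤ Real.exp (‖x‖ + ‖y‖) := by
  rw [Real.exp_add]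
  exact (norm_jordanMul_le _ _).trans
    (mul_le_mul (norm_exp_le x) (norm_exp_le y) (norm_nonneg _) (Real.exp_pos _).le)

theorem norm_jordanMul_exp_sub_exp_add_le (x y : 𝔸) :
    ‖jordanMul (exp x) (exp y) - exp (x + y)‖ ≤ 2 * (‖x‖ + ‖y‖) ^ 2 * Real.exp (‖x‖ + ‖y‖) := by
  have hxy := norm_exp_mul_exp_sub_exp_add_le x y
  have hyx := norm_exp_mul_exp_sub_exp_add_le y x
  rw [add_comm y, add_comm ‖y‖] at hyx
  rw [jordanMul_sub, norm_smul, Real.norm_of_nonneg (by norm_num)]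
  linarith [norm_add_le (exp x * exp y - exp (x + y)) (exp y * exp x - exp (x + y))]

theorem tendsto_pow_inv_nat_of_norm_sub_exp_le {F : ℝ → 𝔸} {C : 𝔸} {s K : ℝ} (hC : ‖C‖ ≤ s)
    (hF : ∀ t, 0 ≤ t → ‖F t‖ ≤ Real.exp (t * s))
    (hFC : ∀ t, 0 ≤ t → ‖F t - exp (t • C)‖ ≤ K * t ^ 2 * Real.exp (t * s)) :
    Tendsto (fun n : ℕ => F (n : ℝ)⁻¹ ^ n) atTop (𝓝 (exp C)) := by
  have hbound : ∀ n : ℕ,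
      ‖F ((n + 1 : ℕ) : ℝ)⁻¹ ^ (n + 1) - exp C‖ ≤ K * Real.exp s / (n + 1 : ℕ) := by
    intro n
    set t : ℝ := ((n + 1 : ℕ) : ℝ)⁻¹
    have ht : 0 ≤ t := by positivity
    have hnt : ((n + 1 : ℕ) : ℝ) * t = 1 := mul_inv_cancel₀ (by positivity)
    have hexp_pow : exp (t • C) ^ (n + 1) = exp C := by
      let +nondep : NormedAlgebra ℚ 𝔸 := .restrictScalars ℚ ℝ 𝔸
      rw [← exp_nsmul, ← Nat.cast_smul_eq_nsmul ℝ, smul_smul, hnt, one_smul]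
    have hexp_le : ‖exp (t • C)‖ ≤ Real.exp (t * s) := by
      refine (norm_exp_le _).trans (Real.exp_le_exp.mpr ?_)
      rw [norm_smul, Real.norm_of_nonneg ht]
      gcongr
    have hM : Real.exp (t * s) ^ (n + 1) = Real.exp s := by
      rw [← Real.exp_nat_mul, ← mul_assoc, hnt, one_mul]
    rw [← hexp_pow]
    calc ‖F t ^ (n + 1) - exp (t • C) ^ (n + 1)‖
        ≤ (n + 1) * Real.exp (t * s) ^ n * (K * t ^ 2 * Real.exp (t * s)) :=
          (norm_pow_succ_sub_pow_succ_le (hF t ht) hexp_le n).trans (by gcongr; exact hFC t ht)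
      _ = K * Real.exp (t * s) ^ (n + 1) * t * ((n + 1 : ℕ) * t) := by push_cast; ring
      _ = K * Real.exp s / (n + 1 : ℕ) := by rw [hM, hnt, mul_one, div_eq_mul_inv]
  rw [tendsto_iff_norm_sub_tendsto_zero, ← tendsto_add_atTop_iff_nat 1]
  exact squeeze_zero (fun n => norm_nonneg _) hbound
    ((tendsto_const_div_atTop_nhds_zero_nat _).comp (tendsto_add_atTop_nat 1))

theorem tendsto_jordanMul_exp_pow (A B : 𝔸) :
    Tendsto (fun n : ℕ => jordanMul (exp ((n : ℝ)⁻¹ • A)) (exp ((n : ℝ)⁻¹ • B)) ^ n) atTop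
      (𝓝 (exp (A + B))) := by
  set s := ‖A‖ + ‖B‖
  have hnorm : ∀ t : ℝ, 0 ≤ t → ‖t • A‖ + ‖t • B‖ = t * s := fun t ht => by
    rw [norm_smul, norm_smul, Real.norm_of_nonneg ht, mul_add]
  refine tendsto_pow_inv_nat_of_norm_sub_exp_le
    (F := fun t => jordanMul (exp (t • A)) (exp (t • B))) (K := 2 * s ^ 2) (norm_add_le A B)
    (fun t ht => ?_) (fun t ht => ?_)
  · simpa only [hnorm t ht] using norm_jordanMul_exp_le (t • A) (t • B)
  · have := norm_jordanMul_exp_sub_exp_add_le (t • A) (t • B)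
    rw [hnorm t ht, ← smul_add] at this
    linarith [mul_pow t s 2]

end NormedSpace

section LeftRegularRepresentation

variable {𝒜 : Type*} [NormedRing 𝒜] [NormedAlgebra ℝ 𝒜]

noncomputable def mulLeftAlgHom : 𝒜 →ₐ[ℝ] 𝒜 →L[ℝ] 𝒜 :=
  AlgHom.ofLinearMap (ContinuousLinearMap.mul ℝ 𝒜) (by ext; simp)
    fun _ _ => by ext; simp [mul_assoc]

theorem tendsto_of_tendsto_mulLeftAlgHom {ι : Type*} {l : Filter ι} {f : ι → 𝒜} {a : 𝒜}
    (h : Tendsto (fun i => mulLeftAlgHom (f i)) l (𝓝 (mulLeftAlgHom a))) : Tendsto f l (𝓝 a) := by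
  simpa [mulLeftAlgHom, Function.comp_def] using
    ((ContinuousLinearMap.apply ℝ 𝒜 (1 : 𝒜)).continuous.tendsto _).comp h

theorem mulLeftAlgHom_exp [CompleteSpace 𝒜] (x : 𝒜) :
    mulLeftAlgHom (exp x) = exp (mulLeftAlgHom x) := by
  let +nondep : NormedAlgebra ℚ 𝒜 := .restrictScalars ℚ ℝ 𝒜
  let +nondep : NormedAlgebra ℚ (𝒜 →L[ℝ] 𝒜) := .restrictScalars ℚ ℝ _
  exact map_exp mulLeftAlgHom (ContinuousLinearMap.mul ℝ 𝒜).continuous x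

end LeftRegularRepresentation

theorem jordan_lie_trotter {𝒜 : Type*} [NormedRing 𝒜] [NormedAlgebra ℝ 𝒜]
    [CompleteSpace 𝒜] (A B : 𝒜) :
    Filter.Tendsto
      (fun n : ℕ =>
        ((1/2 : ℝ) • (NormedSpace.exp ((n : ℝ)⁻¹ • A) * NormedSpace.exp ((n : ℝ)⁻¹ • B) +
            NormedSpace.exp ((n : ℝ)⁻¹ • B) * NormedSpace.exp ((n : ℝ)⁻¹ • A))) ^ n)
      Filter.atTop (nhds (NormedSpace.exp (A + B))) := by
  rcases subsingleton_or_nontrivial 𝒜 with _ | _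
  · exact tendsto_const_nhds.congr fun _ => Subsingleton.elim _ _
  refine tendsto_of_tendsto_mulLeftAlgHom
    (f := fun n : ℕ => jordanMul (exp ((n : ℝ)⁻¹ • A)) (exp ((n : ℝ)⁻¹ • B)) ^ n) ?_
  simpa only [map_pow, map_jordanMul, mulLeftAlgHom_exp, map_smul, map_add] using
    tendsto_jordanMul_exp_pow (mulLeftAlgHom A) (mulLeftAlgHom B)
end

section
/- For elements A, B in a Banach algebra, exp(A + B) = lim_{n→∞} [ (1/2)( exp(B/(2n)) exp(A/n) exp(B/(2n)) + exp(B/(2n)) exp(A/n) exp(B/(2n)) ) ]^n, i.e., exp(A+B) = lim_{n→∞} ( exp(B/(2n)) exp(A/n) exp(B/(2n)) )^n (symmetrized Lie–Trotter formula). -/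
/-!
Put `F t = exp (t/2 • B) * exp (t • A) * exp (t/2 • B)`. Then `F 0 = 1` and `F' 0 = A + B`, so
`n • (F (1/n) - 1) → A + B`. Any sequence with `n • (x n - 1) → X` has `x n ^ n → exp X`: compare
it with `y n = exp (X / n)`, whose `n`-th power is `exp X`. Both sequences are `1 + O(1/n)`, so
their powers of exponent at most `n` stay bounded, while `n * ‖x n - y n‖ → 0`; the telescoping
sum `x ^ n - y ^ n = ∑ x ^ k * (x - y) * y ^ (n - 1 - k)` then tends to `0`.
-/

open NormedSpace Filter Topology

section PowerBounds
variable {R : Type*} [NormedRing R]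

-- `‖1‖` may exceed `1` in a normed ring, so powers are controlled through `‖x ^ k - 1‖`.
theorem norm_pow_sub_one_le (x : R) (k : ℕ) : ‖x ^ k - 1‖ ≤ (1 + ‖x - 1‖) ^ k - 1 := by
  induction k with
  | zero => simp
  | succ k ih =>
    have hsplit : x ^ (k + 1) - 1 = (x ^ k - 1) + (x ^ k - 1) * (x - 1) + (x - 1) := by
      rw [pow_succ]; noncomm_ring
    calc ‖x ^ (k + 1) - 1‖ ≤ ‖x ^ k - 1‖ + ‖x ^ k - 1‖ * ‖x - 1‖ + ‖x - 1‖ := by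
          rw [hsplit]
          exact norm_add₃_le.trans (by gcongr; exact norm_mul_le _ _)
      _ ≤ ((1 + ‖x - 1‖) ^ k - 1) + ((1 + ‖x - 1‖) ^ k - 1) * ‖x - 1‖ + ‖x - 1‖ := by
          gcongr
      _ = (1 + ‖x - 1‖) ^ (k + 1) - 1 := by ring

-- The right factor `y ^ m` makes the induction go through with bounds on powers only.
theorem norm_pow_sub_pow_mul_pow_le {x y : R} {M : ℝ} {N : ℕ}
    (hx : ∀ k ≤ N, ‖x ^ k‖ ≤ M) (hy : ∀ k ≤ N, ‖y ^ k‖ ≤ M) (n m : ℕ) (hnm : n + m ≤ N) :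
    ‖(x ^ n - y ^ n) * y ^ m‖ ≤ n * (M * ‖x - y‖ * M) := by
  induction n generalizing m with
  | zero => simp
  | succ n ih =>
    have hsplit : (x ^ (n + 1) - y ^ (n + 1)) * y ^ m
        = x ^ n * (x - y) * y ^ m + (x ^ n - y ^ n) * y ^ (m + 1) := by
      rw [pow_succ, pow_succ, pow_succ']; noncomm_ring
    have hM : 0 ≤ M := (norm_nonneg _).trans (hx 0 (Nat.zero_le _))
    calc ‖(x ^ (n + 1) - y ^ (n + 1)) * y ^ m‖
        ≤ ‖x ^ n‖ * ‖x - y‖ * ‖y ^ m‖ + ‖(x ^ n - y ^ n) * y ^ (m + 1)‖ := by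
          rw [hsplit]
          exact (norm_add_le _ _).trans (by gcongr; exact norm_mul₃_le)
      _ ≤ M * ‖x - y‖ * M + n * (M * ‖x - y‖ * M) := by
          gcongr
          · exact hx n (by omega)
          · exact hy m (by omega)
          · exact ih (m + 1) (by omega)
      _ = (n + 1 : ℕ) * (M * ‖x - y‖ * M) := by push_cast; ring

theorem norm_pow_sub_pow_le {x y : R} {M : ℝ} {n : ℕ}
    (hx : ∀ k ≤ n, ‖x ^ k‖ ≤ M) (hy : ∀ k ≤ n, ‖y ^ k‖ ≤ M) :
    ‖x ^ n - y ^ n‖ ≤ M ^ 2 * (n * ‖x - y‖) := by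
  have h := norm_pow_sub_pow_mul_pow_le hx hy n 0 le_rfl
  rw [pow_zero, mul_one] at h
  linarith

end PowerBounds

theorem Real.one_add_div_pow_le_exp {C : ℝ} (hC : 0 ≤ C) (n : ℕ) :
    (1 + C / n) ^ n ≤ Real.exp C := by
  rcases Nat.eq_zero_or_pos n with rfl | hn
  · simp [Real.one_le_exp hC]
  calc (1 + C / n) ^ n ≤ Real.exp (C / n) ^ n :=
        pow_le_pow_left₀ (by positivity) (by linarith [Real.add_one_le_exp (C / n)]) n
    _ = Real.exp C := by rw [← Real.exp_nat_mul]; field_simp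

section SmulSubOne
variable {R : Type*} [NormedRing R] [NormedSpace ℝ R]

theorem eventually_norm_pow_le_of_tendsto_smul_sub_one {x : ℕ → R} {X : R}
    (hx : Tendsto (fun n : ℕ => (n : ℝ) • (x n - 1)) atTop (𝓝 X)) :
    ∃ M, ∀ᶠ n in atTop, ∀ k ≤ n, ‖x n ^ k‖ ≤ M := by
  set C := ‖X‖ + 1
  have hC : 0 < C := by positivity
  refine ⟨‖(1 : R)‖ + Real.exp C, ?_⟩
  have hbdd : ∀ᶠ n : ℕ in atTop, ‖(n : ℝ) • (x n - 1)‖ ≤ C :=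
    hx.norm.eventually (ge_mem_nhds (lt_add_one _))
  filter_upwards [hbdd, eventually_gt_atTop 0] with n hn hn0 k hk
  have hn' : (0 : ℝ) < n := by exact_mod_cast hn0
  have hx1 : ‖x n - 1‖ ≤ C / n := by
    rw [norm_smul, Real.norm_natCast] at hn
    rw [le_div_iff₀ hn']; linarith
  calc ‖x n ^ k‖ ≤ ‖(1 : R)‖ + ‖x n ^ k - 1‖ := norm_le_norm_add_norm_sub' _ _
    _ ≤ ‖(1 : R)‖ + ((1 + C / n) ^ n - 1) := by
        gcongr
        refine (norm_pow_sub_one_le _ _).trans (sub_le_sub_right ?_ 1)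
        calc (1 + ‖x n - 1‖) ^ k ≤ (1 + C / n) ^ k := by gcongr
          _ ≤ (1 + C / n) ^ n :=
            pow_le_pow_right₀ (le_add_of_nonneg_right (div_nonneg hC.le hn'.le)) hk
    _ ≤ ‖(1 : R)‖ + Real.exp C := by
        linarith [Real.one_add_div_pow_le_exp hC.le n]

theorem tendsto_pow_sub_pow_of_tendsto_smul_sub_one {x y : ℕ → R} {X : R}
    (hx : Tendsto (fun n : ℕ => (n : ℝ) • (x n - 1)) atTop (𝓝 X))
    (hy : Tendsto (fun n : ℕ => (n : ℝ) • (y n - 1)) atTop (𝓝 X)) :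
    Tendsto (fun n => x n ^ n - y n ^ n) atTop (𝓝 0) := by
  obtain ⟨Mx, hMx⟩ := eventually_norm_pow_le_of_tendsto_smul_sub_one hx
  obtain ⟨My, hMy⟩ := eventually_norm_pow_le_of_tendsto_smul_sub_one hy
  have hxy : Tendsto (fun n : ℕ => (n : ℝ) * ‖x n - y n‖) atTop (𝓝 0) := by
    have h := (hx.sub hy).norm
    simp only [← smul_sub, sub_sub_sub_cancel_right, sub_self, norm_zero, norm_smul,
      Real.norm_natCast] at h
    exact h
  refine squeeze_zero_norm' ?_ (by simpa using hxy.const_mul (max Mx My ^ 2))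
  filter_upwards [hMx, hMy] with n hx hy
  exact norm_pow_sub_pow_le (fun k hk => (hx k hk).trans (le_max_left _ _))
    (fun k hk => (hy k hk).trans (le_max_right _ _))

end SmulSubOne

theorem HasDerivAt.tendsto_natCast_smul_sub_inv {E : Type*} [NormedAddCommGroup E]
    [NormedSpace ℝ E] {f : ℝ → E} {f' : E} (h : HasDerivAt f f' 0) :
    Tendsto (fun n : ℕ => (n : ℝ) • (f (n : ℝ)⁻¹ - f 0)) atTop (𝓝 f') := by
  have h := h.tendsto_slope_zero_right.comp
    (tendsto_inv_atTop_nhdsGT_zero.comp tendsto_natCast_atTop_atTop)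
  simpa [Function.comp_def] using h

section Exp
variable {R : Type*} [NormedRing R] [NormedAlgebra ℝ R] [CompleteSpace R]

theorem exp_inv_natCast_smul_pow (X : R) {n : ℕ} (hn : n ≠ 0) :
    exp ((n : ℝ)⁻¹ • X) ^ n = exp X := by
  -- `exp` does not depend on the `ℚ`-algebra structure that `exp_nsmul` asks for.
  let : NormedAlgebra ℚ R := .restrictScalars ℚ ℝ R
  rw [← exp_nsmul, ← Nat.cast_smul_eq_nsmul ℝ, smul_smul, mul_inv_cancel₀ (by exact_mod_cast hn),
    one_smul]

theorem tendsto_pow_of_tendsto_smul_sub_one {x : ℕ → R} {X : R}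
    (hx : Tendsto (fun n : ℕ => (n : ℝ) • (x n - 1)) atTop (𝓝 X)) :
    Tendsto (fun n => x n ^ n) atTop (𝓝 (exp X)) := by
  have hy : Tendsto (fun n : ℕ => (n : ℝ) • (exp ((n : ℝ)⁻¹ • X) - 1)) atTop (𝓝 X) := by
    simpa using (hasDerivAt_exp_smul_const X (0 : ℝ)).tendsto_natCast_smul_sub_inv
  have hpow : ∀ᶠ n : ℕ in atTop, exp ((n : ℝ)⁻¹ • X) ^ n = exp X :=
    (eventually_ne_atTop 0).mono fun n hn => exp_inv_natCast_smul_pow X hn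
  have h := (tendsto_pow_sub_pow_of_tendsto_smul_sub_one hx hy).add
    (tendsto_const_nhds.congr' (hpow.mono fun n hn => hn.symm))
  simpa using h

end Exp

theorem symmetrized_lie_trotter {𝒜 : Type*} [NormedRing 𝒜] [NormedAlgebra ℝ 𝒜]
    [CompleteSpace 𝒜] (A B : 𝒜) :
    Filter.Tendsto
      (fun n : ℕ =>
        (NormedSpace.exp ((2 * (n : ℝ))⁻¹ • B) * NormedSpace.exp ((n : ℝ)⁻¹ • A) *
            NormedSpace.exp ((2 * (n : ℝ))⁻¹ • B)) ^ n)
      Filter.atTop (nhds (NormedSpace.exp (A + B))) := by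
  set B' : 𝒜 := (2 : ℝ)⁻¹ • B
  have hderiv :
      HasDerivAt (fun t : ℝ => exp (t • B') * exp (t • A) * exp (t • B')) (A + B) 0 := by
    convert ((hasDerivAt_exp_smul_const B' (0 : ℝ)).fun_mul
      (hasDerivAt_exp_smul_const A 0)).fun_mul (hasDerivAt_exp_smul_const B' 0) using 1
    simp only [zero_smul, exp_zero, one_mul, mul_one, B']
    module
  have h :=
    tendsto_pow_of_tendsto_smul_sub_one (by simpa using hderiv.tendsto_natCast_smul_sub_inv)
  convert h using 4 with n <;> rw [mul_inv_rev, mul_smul]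
end

section
/- For elements A, B in a Banach algebra and every positive integer n, ‖exp(A+B) − (exp(B/(2n)) exp(A/n) exp(B/(2n)))^n‖ ≤ (1/(3n²)) · (‖A‖+‖B‖)³ · exp(‖A‖+‖B‖). -/
/-!
Put `a = (‖A‖ + ‖B‖) / n`, `T = exp ((A + B) / n)` and `S = exp (B / 2n) exp (A / n) exp (B / 2n)`.
Replacing every exponential by its Taylor polynomial `1 + x + x² / 2` changes `T` and `S` by at
most `eᵃ - (1 + a + a² / 2)` each, and the two polynomial expressions agree up to degree two, so
their difference is majorised by the same scalar quantity. Hence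
`‖T - S‖ ≤ 2 (eᵃ - 1 - a - a² / 2) ≤ a³ eᵃ / 3`, and telescoping `Tⁿ - Sⁿ` costs a factor
`n e⁽ⁿ⁻¹⁾ᵃ`.

Since `‖1‖` need not be `1` in a normed ring, bounds on elements near `1` are stated in the form
`‖x - 1‖ ≤ s - 1`.
-/

open NormedSpace Finset
open scoped Nat

theorem Real.hasSum_exp_sub_sum_range (t : ℝ) (j : ℕ) :
    HasSum (fun k ↦ t ^ (k + j) / (k + j)!) (Real.exp t - ∑ i ∈ range j, t ^ i / i !) := by
  rw [Real.exp_eq_exp_ℝ]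
  exact (hasSum_nat_add_iff' j).mpr (expSeries_div_hasSum_exp t)

theorem Real.exp_sub_sum_range_le {t : ℝ} (ht : 0 ≤ t) (j : ℕ) :
    Real.exp t - ∑ i ∈ range j, t ^ i / i ! ≤ t ^ j / j ! * Real.exp t := by
  have hexp : HasSum (fun k ↦ t ^ k / k !) (Real.exp t) := by
    simpa using Real.hasSum_exp_sub_sum_range t 0
  refine hasSum_le (fun k ↦ ?_) (Real.hasSum_exp_sub_sum_range t j) (hexp.mul_left _)
  have hfact : (j ! * k ! : ℝ) ≤ (k + j)! := by
    rw [add_comm]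
    exact_mod_cast Nat.le_of_dvd (Nat.factorial_pos _)
      (Nat.factorial_mul_factorial_dvd_factorial_add j k)
  rw [pow_add, div_mul_div_comm, mul_comm (t ^ k)]
  gcongr

theorem norm_exp_sub_sum_range_le {𝒜 : Type*} [NormedRing 𝒜] [NormedAlgebra ℝ 𝒜]
    [CompleteSpace 𝒜] {x : 𝒜} {t : ℝ} (hx : ‖x‖ ≤ t) {j : ℕ} (hj : j ≠ 0) :
    ‖exp x - ∑ i ∈ range j, (i ! : ℝ)⁻¹ • x ^ i‖ ≤ Real.exp t - ∑ i ∈ range j, t ^ i / i ! := by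
  refine ((hasSum_nat_add_iff' j).mpr (exp_series_hasSum_exp' (𝕂 := ℝ) x)).norm_le_of_bounded
    (Real.hasSum_exp_sub_sum_range t j) fun k ↦ ?_
  rw [norm_smul, norm_inv, Real.norm_natCast, inv_mul_eq_div]
  gcongr
  exact (norm_pow_le' x (by omega)).trans (pow_le_pow_left₀ (norm_nonneg x) hx _)

section Products

variable {𝒜 : Type*} [NormedRing 𝒜]

theorem norm_mul_sub_mul_le {x x' y y' : 𝒜} {s s' t t' : ℝ} (hx : ‖x - x'‖ ≤ s - s')
    (hx' : ‖x'‖ ≤ s') (hy : ‖y - y'‖ ≤ t - t') (hy' : ‖y‖ ≤ t) :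
    ‖x * y - x' * y'‖ ≤ s * t - s' * t' := by
  have hs : 0 ≤ s - s' := (norm_nonneg _).trans hx
  calc ‖x * y - x' * y'‖ = ‖(x - x') * y + x' * (y - y')‖ := by noncomm_ring
    _ ≤ ‖x - x'‖ * ‖y‖ + ‖x'‖ * ‖y - y'‖ := norm_add_le_of_le (norm_mul_le _ _) (norm_mul_le _ _)
    _ ≤ (s - s') * t + s' * (t - t') := by gcongr; exact (norm_nonneg _).trans hx'
    _ = s * t - s' * t' := by ring

theorem norm_mul_sub_mul_le_of_sub_one_le {x x' y y' : 𝒜} {s s' t t' : ℝ}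
    (hx : ‖x - x'‖ ≤ s - s') (hx' : ‖x' - 1‖ ≤ s' - 1) (hy : ‖y - y'‖ ≤ t - t')
    (hy' : ‖y - 1‖ ≤ t - 1) : ‖x * y - x' * y'‖ ≤ s * t - s' * t' := by
  have hprod := norm_mul_sub_mul_le (x := x - 1) (x' := x' - 1) (y := y - 1) (y' := y' - 1)
    (by rwa [sub_sub_sub_cancel_right, sub_sub_sub_cancel_right]) hx'
    (by rwa [sub_sub_sub_cancel_right, sub_sub_sub_cancel_right]) hy'
  calc ‖x * y - x' * y'‖ = ‖((x - 1) * (y - 1) - (x' - 1) * (y' - 1)) + (x - x') + (y - y')‖ := by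
        noncomm_ring
    _ ≤ ((s - 1) * (t - 1) - (s' - 1) * (t' - 1)) + (s - s') + (t - t') :=
        norm_add₃_le.trans (add_le_add (add_le_add hprod hx) hy)
    _ = s * t - s' * t' := by ring

theorem norm_mul_sub_one_le {x y : 𝒜} {s t : ℝ} (hx : ‖x - 1‖ ≤ s - 1) (hy : ‖y - 1‖ ≤ t - 1) :
    ‖x * y - 1‖ ≤ s * t - 1 := by
  simpa using norm_mul_sub_mul_le_of_sub_one_le (x' := (1 : 𝒜)) (y' := 1) (s' := 1) (t' := 1)
    hx (by simp) hy hy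

theorem norm_pow_sub_one_le_s11 {x : 𝒜} {s : ℝ} (hx : ‖x - 1‖ ≤ s - 1) (n : ℕ) :
    ‖x ^ n - 1‖ ≤ s ^ n - 1 := by
  induction n with
  | zero => simp
  | succ n ih => simpa only [pow_succ] using norm_mul_sub_one_le ih hx

theorem norm_mul_le_of_norm_sub_one_le {y : 𝒜} {t : ℝ} (hy : ‖y - 1‖ ≤ t - 1) (z : 𝒜) :
    ‖z * y‖ ≤ ‖z‖ * t := by
  calc ‖z * y‖ = ‖z + z * (y - 1)‖ := by noncomm_ring
    _ ≤ ‖z‖ + ‖z‖ * (t - 1) := norm_add_le_of_le le_rfl ((norm_mul_le _ _).trans (by gcongr))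
    _ = ‖z‖ * t := by ring

theorem norm_mul_le_of_norm_sub_one_le' {y : 𝒜} {t : ℝ} (hy : ‖y - 1‖ ≤ t - 1) (z : 𝒜) :
    ‖y * z‖ ≤ t * ‖z‖ := by
  calc ‖y * z‖ = ‖z + (y - 1) * z‖ := by noncomm_ring
    _ ≤ ‖z‖ + (t - 1) * ‖z‖ := norm_add_le_of_le le_rfl ((norm_mul_le _ _).trans (by gcongr))
    _ = t * ‖z‖ := by ring

theorem norm_pow_succ_sub_pow_succ_le_s11 {x y : 𝒜} {s : ℝ} (hx : ‖x - 1‖ ≤ s - 1)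
    (hy : ‖y - 1‖ ≤ s - 1) (n : ℕ) :
    ‖x ^ (n + 1) - y ^ (n + 1)‖ ≤ (n + 1) * s ^ n * ‖x - y‖ := by
  induction n with
  | zero => simp
  | succ n ih =>
    have hs : 0 ≤ s := by linarith [(norm_nonneg _).trans hx]
    calc ‖x ^ (n + 2) - y ^ (n + 2)‖
        = ‖x ^ (n + 1) * (x - y) + (x ^ (n + 1) - y ^ (n + 1)) * y‖ := by
          rw [pow_succ x (n + 1), pow_succ y (n + 1)]; noncomm_ring
      _ ≤ s ^ (n + 1) * ‖x - y‖ + ‖x ^ (n + 1) - y ^ (n + 1)‖ * s :=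
          norm_add_le_of_le (norm_mul_le_of_norm_sub_one_le' (norm_pow_sub_one_le_s11 hx _) _)
            (norm_mul_le_of_norm_sub_one_le hy _)
      _ ≤ s ^ (n + 1) * ‖x - y‖ + (n + 1) * s ^ n * ‖x - y‖ * s := by gcongr
      _ = (↑(n + 1) + 1) * s ^ (n + 1) * ‖x - y‖ := by push_cast; ring

end Products

noncomputable def expTaylor₂ {𝒜 : Type*} [Ring 𝒜] [Module ℝ 𝒜] (x : 𝒜) : 𝒜 :=
  1 + x + (2 : ℝ)⁻¹ • x ^ 2

section Taylor

variable {𝒜 : Type*} [NormedRing 𝒜] [NormedAlgebra ℝ 𝒜]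

theorem sum_range_three_eq_expTaylor₂ (x : 𝒜) :
    ∑ i ∈ range 3, (i ! : ℝ)⁻¹ • x ^ i = expTaylor₂ x := by
  simp [sum_range_succ, expTaylor₂, add_assoc]

theorem Real.sum_range_three_eq_expTaylor₂ (t : ℝ) :
    ∑ i ∈ range 3, t ^ i / i ! = expTaylor₂ t := by
  simp [sum_range_succ, expTaylor₂]; ring

theorem Real.exp_sub_expTaylor₂_le {t : ℝ} (ht : 0 ≤ t) :
    Real.exp t - expTaylor₂ t ≤ t ^ 3 / 6 * Real.exp t := by
  simpa [Real.sum_range_three_eq_expTaylor₂, Nat.factorial] using Real.exp_sub_sum_range_le ht 3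

theorem norm_half_smul_sq_le {x : 𝒜} {t : ℝ} (hx : ‖x‖ ≤ t) :
    ‖(2 : ℝ)⁻¹ • x ^ 2‖ ≤ t ^ 2 / 2 := by
  rw [norm_smul, Real.norm_of_nonneg (by norm_num), inv_mul_eq_div]
  gcongr
  exact (norm_pow_le' x two_pos).trans (pow_le_pow_left₀ (norm_nonneg x) hx _)

theorem norm_expTaylor₂_sub_one_le {x : 𝒜} {t : ℝ} (hx : ‖x‖ ≤ t) :
    ‖expTaylor₂ x - 1‖ ≤ expTaylor₂ t - 1 := by
  simp only [expTaylor₂, add_assoc, add_sub_cancel_left, smul_eq_mul]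
  calc ‖x + (2 : ℝ)⁻¹ • x ^ 2‖ ≤ t + t ^ 2 / 2 := norm_add_le_of_le hx (norm_half_smul_sq_le hx)
    _ = t + 2⁻¹ * t ^ 2 := by ring

theorem norm_expTaylor₂_mul_mul_sub_le {u X : 𝒜} {b x : ℝ} (hu : ‖u‖ ≤ b) (hX : ‖X‖ ≤ x) :
    ‖expTaylor₂ u * expTaylor₂ X * expTaylor₂ u - expTaylor₂ (X + (2 : ℝ) • u)‖ ≤
      expTaylor₂ b * expTaylor₂ x * expTaylor₂ b - expTaylor₂ (x + 2 * b) := by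
  set v := u + (2 : ℝ)⁻¹ • u ^ 2 with hv_def
  set y := X + (2 : ℝ)⁻¹ • X ^ 2 with hy_def
  have hvu : ‖v - u‖ ≤ (b + b ^ 2 / 2) - b := by
    simpa [hv_def] using norm_half_smul_sq_le hu
  have hyX : ‖y - X‖ ≤ (x + x ^ 2 / 2) - x := by
    simpa [hy_def] using norm_half_smul_sq_le hX
  have hv : ‖v‖ ≤ b + b ^ 2 / 2 := norm_add_le_of_le hu (norm_half_smul_sq_le hu)
  have hy : ‖y‖ ≤ x + x ^ 2 / 2 := norm_add_le_of_le hX (norm_half_smul_sq_le hX)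
  have hvyv : ‖v * y * v‖ ≤ (b + b ^ 2 / 2) * (x + x ^ 2 / 2) * (b + b ^ 2 / 2) :=
    (norm_mul₃_le ..).trans (by
      have := (norm_nonneg _).trans hv
      have := (norm_nonneg _).trans hy
      gcongr)
  -- The terms of degree at most two cancel; each bracket is majorised by its scalar analogue.
  have hdecomp : expTaylor₂ u * expTaylor₂ X * expTaylor₂ u - expTaylor₂ (X + (2 : ℝ) • u) =
      (v * y - u * X) + (y * v - X * u) + (v * v - u * u) + v * y * v := by
    simp only [hv_def, hy_def, expTaylor₂, sq, mul_add, add_mul, smul_mul_assoc, mul_smul_comm,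
      smul_add, smul_smul, mul_one, one_mul]
    module
  rw [hdecomp]
  refine (norm_add₄_le ..).trans ?_
  have := norm_mul_sub_mul_le hvu hu hyX hy
  have := norm_mul_sub_mul_le hyX hX hvu hv
  have := norm_mul_sub_mul_le hvu hu hvu hv
  simp only [expTaylor₂, smul_eq_mul]
  linarith

end Taylor

section Splitting

variable {𝒜 : Type*} [NormedRing 𝒜] [NormedAlgebra ℝ 𝒜] [CompleteSpace 𝒜]

theorem norm_exp_sub_one_le {x : 𝒜} {t : ℝ} (hx : ‖x‖ ≤ t) : ‖exp x - 1‖ ≤ Real.exp t - 1 := by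
  simpa using norm_exp_sub_sum_range_le hx one_ne_zero

theorem norm_exp_sub_expTaylor₂_le {x : 𝒜} {t : ℝ} (hx : ‖x‖ ≤ t) :
    ‖exp x - expTaylor₂ x‖ ≤ Real.exp t - expTaylor₂ t := by
  simpa only [sum_range_three_eq_expTaylor₂, Real.sum_range_three_eq_expTaylor₂] using
    norm_exp_sub_sum_range_le hx three_ne_zero

theorem norm_exp_mul_exp_mul_exp_sub_one_le (X Y : 𝒜) :
    ‖exp ((2 : ℝ)⁻¹ • Y) * exp X * exp ((2 : ℝ)⁻¹ • Y) - 1‖ ≤ Real.exp (‖X‖ + ‖Y‖) - 1 := by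
  have hu := norm_exp_sub_one_le (norm_smul_le (2 : ℝ)⁻¹ Y)
  have hX := norm_exp_sub_one_le (le_refl ‖X‖)
  convert norm_mul_sub_one_le (norm_mul_sub_one_le hu hX) hu using 2
  rw [← Real.exp_add, ← Real.exp_add]; norm_num; ring_nf

theorem norm_exp_mul_exp_mul_exp_sub_expTaylor₂_le {u X : 𝒜} {b x : ℝ} (hu : ‖u‖ ≤ b)
    (hX : ‖X‖ ≤ x) :
    ‖exp u * exp X * exp u - expTaylor₂ u * expTaylor₂ X * expTaylor₂ u‖ ≤
      Real.exp b * Real.exp x * Real.exp b - expTaylor₂ b * expTaylor₂ x * expTaylor₂ b := by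
  have hQ := norm_expTaylor₂_sub_one_le hu
  have hEu := norm_exp_sub_expTaylor₂_le hu
  exact norm_mul_sub_mul_le_of_sub_one_le
    (norm_mul_sub_mul_le_of_sub_one_le hEu hQ (norm_exp_sub_expTaylor₂_le hX)
      (norm_exp_sub_one_le hX))
    (norm_mul_sub_one_le hQ (norm_expTaylor₂_sub_one_le hX)) hEu (norm_exp_sub_one_le hu)

theorem norm_exp_add_sub_exp_mul_exp_mul_exp_le (X Y : 𝒜) :
    ‖exp (X + Y) - exp ((2 : ℝ)⁻¹ • Y) * exp X * exp ((2 : ℝ)⁻¹ • Y)‖ ≤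
      (‖X‖ + ‖Y‖) ^ 3 / 3 * Real.exp (‖X‖ + ‖Y‖) := by
  set u := (2 : ℝ)⁻¹ • Y
  set b := ‖Y‖ / 2
  set a := ‖X‖ + ‖Y‖
  have hu : ‖u‖ ≤ b := by simp [u, b, norm_smul, div_eq_inv_mul]
  have hXY : X + (2 : ℝ) • u = X + Y := by simp [u, smul_smul]
  have ha : ‖X‖ + 2 * b = a := by simp [a, b]; ring
  have hexp : Real.exp b * Real.exp ‖X‖ * Real.exp b = Real.exp a := by
    rw [← Real.exp_add, ← Real.exp_add, ← ha]; ring_nf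
  have hT := norm_exp_sub_expTaylor₂_le (norm_add_le X Y)
  have hS := norm_exp_mul_exp_mul_exp_sub_expTaylor₂_le hu (le_refl ‖X‖)
  have hP := norm_expTaylor₂_mul_mul_sub_le hu (le_refl ‖X‖)
  rw [hexp] at hS
  rw [ha, hXY] at hP
  have htail := Real.exp_sub_expTaylor₂_le (by positivity : 0 ≤ a)
  calc _ = ‖(exp (X + Y) - expTaylor₂ (X + Y))
          - (exp u * exp X * exp u - expTaylor₂ u * expTaylor₂ X * expTaylor₂ u)
          - (expTaylor₂ u * expTaylor₂ X * expTaylor₂ u - expTaylor₂ (X + Y))‖ := by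
        congr 1; abel
    _ ≤ (Real.exp a - expTaylor₂ a) + (Real.exp a - expTaylor₂ b * expTaylor₂ ‖X‖ * expTaylor₂ b)
          + (expTaylor₂ b * expTaylor₂ ‖X‖ * expTaylor₂ b - expTaylor₂ a) :=
        (norm_sub_le _ _).trans (add_le_add ((norm_sub_le _ _).trans (add_le_add hT hS)) hP)
    _ ≤ a ^ 3 / 3 * Real.exp a := by linarith

theorem exp_eq_exp_inv_smul_pow (x : 𝒜) {n : ℕ} (hn : n ≠ 0) :
    exp x = exp ((n : ℝ)⁻¹ • x) ^ n := by
  let _ : NormedAlgebra ℚ 𝒜 := .restrictScalars ℚ ℝ 𝒜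
  rw [← exp_nsmul, ← Nat.cast_smul_eq_nsmul ℝ, smul_smul, mul_inv_cancel₀ (by exact_mod_cast hn),
    one_smul]

end Splitting

theorem suzuki_symmetrized_error {𝒜 : Type*} [NormedRing 𝒜] [NormedAlgebra ℝ 𝒜]
    [CompleteSpace 𝒜] (A B : 𝒜) (n : ℕ) (hn : 1 ≤ n) :
    ‖NormedSpace.exp (A + B) -
        (NormedSpace.exp ((2 * (n : ℝ))⁻¹ • B) * NormedSpace.exp ((n : ℝ)⁻¹ • A) *
            NormedSpace.exp ((2 * (n : ℝ))⁻¹ • B)) ^ n‖ ≤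
      1 / (3 * (n : ℝ) ^ 2) * (‖A‖ + ‖B‖) ^ 3 * Real.exp (‖A‖ + ‖B‖) := by
  obtain ⟨m, rfl⟩ : ∃ m, n = m + 1 := ⟨n - 1, by omega⟩
  set X := ((m + 1 : ℕ) : ℝ)⁻¹ • A
  set Y := ((m + 1 : ℕ) : ℝ)⁻¹ • B
  set a := ‖X‖ + ‖Y‖
  have hB : (2 * ((m + 1 : ℕ) : ℝ))⁻¹ • B = (2 : ℝ)⁻¹ • Y := by
    rw [smul_smul, mul_inv]
  have ha : a = (‖A‖ + ‖B‖) / (m + 1 : ℕ) := by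
    simp only [a, X, Y, norm_smul, norm_inv, Real.norm_natCast]; ring
  have hexp : Real.exp a ^ (m + 1) = Real.exp (‖A‖ + ‖B‖) := by
    rw [← Real.exp_nat_mul, ha, mul_div_cancel₀ _ (by positivity)]
  rw [exp_eq_exp_inv_smul_pow (A + B) m.succ_ne_zero, smul_add, hB]
  calc _ ≤ (m + 1) * Real.exp a ^ m *
        ‖exp (X + Y) - exp ((2 : ℝ)⁻¹ • Y) * exp X * exp ((2 : ℝ)⁻¹ • Y)‖ :=
        norm_pow_succ_sub_pow_succ_le_s11 (norm_exp_sub_one_le (norm_add_le X Y))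
          (norm_exp_mul_exp_mul_exp_sub_one_le X Y) m
    _ ≤ (m + 1) * Real.exp a ^ m * (a ^ 3 / 3 * Real.exp a) := by
        gcongr; exact norm_exp_add_sub_exp_mul_exp_mul_exp_le X Y
    _ = _ := by
        rw [← hexp, ha]; push_cast; field_simp; ring
end
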